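/- Let (a_n)_{n≥0} satisfy a_n ≥ 1 for all n, and suppose there are constants C > 1, D > 0 and α ∈ [0,1) with 0 ≤ C(n+1) − (a_0 + ⋯ + a_n) ≤ D(n+1)^α for all n ≥ 0. Set C₁ := D/min(C−1, 1). For a tuple I = (i_1,…,i_k) ∈ {0,1}^k, write a^{(0)}_x = 1 and a^{(1)}_x = a_x − 1, and set a^I_n := Σ_{x_1+⋯+x_k=n} a^{(i_1)}_{x_1}⋯a^{(i_k)}_{x_k}, summing over k-tuples of nonnegative integers with sum n. If k ≥ 2 and I has k₀ ≥ 1 zero entries and k₁ one entries, then for all n ≥ 0, (1 − C₁k(k−1)/(n+k−1)^{1−α}) · binom(n+k−1, k−1) · (C−1)^{k₁} ≤ a^I_n ≤ binom(n+k−1, k−1) · (C−1)^{k₁}. -/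

import Mathlib

/-!
Put `b = a - 1`, `c = C - 1` and `B = ∑ bₘ Xᵐ`. Then `a^I_n` is the `n`-th coefficient of
`B ^ k₁ * (1 - X)⁻¹ ^ k₀`, and multiplying by `(1 - X)⁻¹ = ∑ Xᵐ` takes partial sums, so the
hypothesis says that, in degrees `≤ n`, `c (1 - X)⁻² - E (1 - X)⁻¹ ≤ B (1 - X)⁻¹ ≤ c (1 - X)⁻²`
with `E = D (n + 1) ^ α`. All series involved have nonnegative coefficients, so such
coefficientwise inequalities may be multiplied through. Trading the factors `B` one at a time
against a spare factor `(1 - X)⁻¹` yields `c ^ k₁ (1 - X)⁻ᵏ` as an upper bound and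
`c ^ k₁ (1 - X)⁻ᵏ - k₁ E c ^ (k₁ - 1) (1 - X)⁻⁽ᵏ⁻¹⁾` as a lower bound, and the coefficients of
`(1 - X)⁻ᵈ` are binomial coefficients. Finally
`(k - 1) * choose (n + k - 1) (k - 1) = (n + k - 1) * choose (n + k - 2) (k - 2)` puts the error
term in the stated relative form.
-/

open PowerSeries Finset

namespace PowerSeries

section CommSemiring

variable {R : Type*} [CommSemiring R]

theorem coeff_prod_fin {k : ℕ} (φ : Fin k → R⟦X⟧) (n : ℕ) :
    coeff n (∏ i, φ i) = ∑ x ∈ Nat.antidiagonalTuple k n, ∏ i, coeff (x i) (φ i) := by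
  rw [coeff_prod, ← piAntidiag_univ_fin_eq_antidiagonalTuple, finsuppAntidiag, sum_map]
  exact sum_attach (piAntidiag univ n) fun x => ∏ i, coeff (x i) (φ i)

theorem sum_antidiagonalTuple_prod_ite_eq_coeff {k : ℕ} (I : Fin k → Bool) (f : ℕ → R) (n : ℕ) :
    ∑ x ∈ Nat.antidiagonalTuple k n, ∏ i, (if I i then f (x i) else 1) =
      coeff n (mk f ^ #{i | I i = true} * mk 1 ^ #{i | I i = false}) := by
  have hprod : ∏ i, (if I i then mk f else mk 1) =
      mk f ^ #{i | I i = true} * (mk 1 : R⟦X⟧) ^ #{i | I i = false} := by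
    rw [prod_ite, prod_const, prod_const]
    simp
  rw [← hprod, coeff_prod_fin]
  simp only [apply_ite (coeff _), coeff_mk, Pi.one_apply]

theorem coeff_mk_mul_mk_one (f : ℕ → R) (q : ℕ) :
    coeff q (mk f * mk 1) = ∑ i ∈ range (q + 1), f i := by
  simp only [coeff_mul, coeff_mk, Pi.one_apply, mul_one, Nat.sum_antidiagonal_eq_sum_range_succ_mk]

end CommSemiring

section CommRing

variable {R : Type*} [CommRing R]

theorem coeff_mk_one_pow (d q : ℕ) : coeff q ((mk 1 : R⟦X⟧) ^ (d + 1)) = (d + q).choose d := by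
  rw [mk_one_pow_eq_mk_choose_add, coeff_mk]

theorem coeff_C_mul_mk_one_pow (a : R) (d q : ℕ) :
    coeff q (C a * (mk 1 : R⟦X⟧) ^ (d + 1)) = a * (d + q).choose d := by
  rw [coeff_C_mul, coeff_mk_one_pow]

end CommRing

section Order

variable {R : Type*} [CommRing R] [PartialOrder R]

def CoeffLE (n : ℕ) (φ ψ : R⟦X⟧) : Prop := ∀ m ≤ n, coeff m φ ≤ coeff m ψ

def CoeffNonneg (φ : R⟦X⟧) : Prop := ∀ m, 0 ≤ coeff m φ

local notation:50 φ " ≤[" n "] " ψ => CoeffLE n φ ψ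

theorem CoeffLE.refl (n : ℕ) (φ : R⟦X⟧) : φ ≤[n] φ := fun _ _ => le_rfl

theorem CoeffLE.trans {n : ℕ} {φ ψ χ : R⟦X⟧} (h₁ : φ ≤[n] ψ) (h₂ : ψ ≤[n] χ) : φ ≤[n] χ :=
  fun m hm => (h₁ m hm).trans (h₂ m hm)

instance (n : ℕ) : @Trans R⟦X⟧ R⟦X⟧ R⟦X⟧ (CoeffLE n) (CoeffLE n) (CoeffLE n) :=
  ⟨CoeffLE.trans⟩

theorem coeffNonneg_mk {f : ℕ → R} (hf : ∀ m, 0 ≤ f m) : CoeffNonneg (mk f) := fun m => by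
  simpa only [coeff_mk] using hf m

theorem mk_mul_mk_one_coeffLE {b : ℕ → R} {c : R} {n : ℕ}
    (hub : ∀ q : ℕ, ∑ i ∈ range (q + 1), b i ≤ c * (q + 1)) :
    mk b * mk 1 ≤[n] C c * mk 1 ^ 2 := fun q _ => by
  rw [coeff_mk_mul_mk_one, coeff_C_mul, coeff_mk_one_pow]
  simpa [add_comm] using hub q

theorem coeffLE_mk_mul_mk_one {b : ℕ → R} {c E : R} {n : ℕ}
    (hlb : ∀ q ≤ n, c * (q + 1) - E ≤ ∑ i ∈ range (q + 1), b i) :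
    C c * mk 1 ^ 2 - C E * mk 1 ≤[n] mk b * mk 1 := fun q hq => by
  rw [coeff_mk_mul_mk_one, map_sub, coeff_C_mul, coeff_C_mul, coeff_mk_one_pow, coeff_mk]
  simpa [add_comm] using hlb q hq

variable [IsOrderedRing R]

theorem CoeffLE.sub {n : ℕ} {φ₁ ψ₁ φ₂ ψ₂ : R⟦X⟧} (h₁ : φ₁ ≤[n] ψ₁) (h₂ : φ₂ ≤[n] ψ₂) :
    φ₁ - ψ₂ ≤[n] ψ₁ - φ₂ := fun m hm => by
  simpa only [map_sub] using sub_le_sub (h₁ m hm) (h₂ m hm)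

theorem CoeffLE.C_mul {n : ℕ} {φ ψ : R⟦X⟧} (h : φ ≤[n] ψ) {c : R} (hc : 0 ≤ c) :
    C c * φ ≤[n] C c * ψ := fun m hm => by
  simpa only [coeff_C_mul] using mul_le_mul_of_nonneg_left (h m hm) hc

theorem CoeffLE.mul_right {n : ℕ} {φ ψ : R⟦X⟧} (h : φ ≤[n] ψ) {χ : R⟦X⟧} (hχ : CoeffNonneg χ) :
    φ * χ ≤[n] ψ * χ := fun m hm => by
  rw [coeff_mul, coeff_mul]
  refine sum_le_sum fun p hp => mul_le_mul_of_nonneg_right (h _ ?_) (hχ _)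
  exact (HasAntidiagonal.antidiagonal.fst_le hp).trans hm

theorem CoeffNonneg.mul {φ ψ : R⟦X⟧} (hφ : CoeffNonneg φ) (hψ : CoeffNonneg ψ) :
    CoeffNonneg (φ * ψ) := fun m => by
  rw [coeff_mul]
  exact sum_nonneg fun p _ => mul_nonneg (hφ _) (hψ _)

theorem CoeffNonneg.pow {φ : R⟦X⟧} (hφ : CoeffNonneg φ) (l : ℕ) : CoeffNonneg (φ ^ l) := by
  induction l with
  | zero => intro m; rw [pow_zero, coeff_one]; split_ifs <;> simp
  | succ l ih => rw [pow_succ]; exact ih.mul hφ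

variable {b : ℕ → R} {c E : R} {n : ℕ}

theorem mk_pow_mul_mk_one_pow_coeffLE (hb : ∀ m, 0 ≤ b m) (hc : 0 ≤ c)
    (hub : ∀ q : ℕ, ∑ i ∈ range (q + 1), b i ≤ c * (q + 1)) (l j : ℕ) :
    mk b ^ l * mk 1 ^ (j + 1) ≤[n] C c ^ l * mk 1 ^ (j + 1 + l) := by
  induction l generalizing j with
  | zero => simpa using CoeffLE.refl n _
  | succ l ih =>
    have hrest : CoeffNonneg (mk b ^ l * (mk 1 : R⟦X⟧) ^ j) :=
      ((coeffNonneg_mk hb).pow l).mul ((coeffNonneg_mk fun _ => zero_le_one).pow j)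
    calc mk b ^ (l + 1) * mk 1 ^ (j + 1) = (mk b * mk 1) * (mk b ^ l * mk 1 ^ j) := by ring
      _ ≤[n] (C c * mk 1 ^ 2) * (mk b ^ l * mk 1 ^ j) :=
          (mk_mul_mk_one_coeffLE hub).mul_right hrest
      _ = C c * (mk b ^ l * mk 1 ^ (j + 1 + 1)) := by ring
      _ ≤[n] C c * (C c ^ l * mk 1 ^ (j + 1 + 1 + l)) := (ih (j + 1)).C_mul hc
      _ = C c ^ (l + 1) * mk 1 ^ (j + 1 + (l + 1)) := by ring

theorem coeffLE_mk_pow_mul_mk_one_pow (hb : ∀ m, 0 ≤ b m) (hc : 0 ≤ c) (hE : 0 ≤ E)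
    (hub : ∀ q : ℕ, ∑ i ∈ range (q + 1), b i ≤ c * (q + 1))
    (hlb : ∀ q ≤ n, c * (q + 1) - E ≤ ∑ i ∈ range (q + 1), b i) (l j : ℕ) :
    C (c ^ (l + 1)) * mk 1 ^ (j + l + 2) - C ((l + 1) * E * c ^ l) * mk 1 ^ (j + l + 1)
      ≤[n] mk b ^ (l + 1) * mk 1 ^ (j + 1) := by
  have hone : CoeffNonneg (mk 1 : R⟦X⟧) := coeffNonneg_mk fun _ => zero_le_one
  induction l generalizing j with
  | zero =>
    calc C (c ^ (0 + 1)) * mk 1 ^ (j + 0 + 2) - C ((((0 : ℕ) : R) + 1) * E * c ^ 0)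
          * mk 1 ^ (j + 0 + 1)
        = (C c * mk 1 ^ 2 - C E * mk 1) * mk 1 ^ j := by
          simp only [Nat.cast_zero, zero_add, pow_one, pow_zero, one_mul, mul_one]; ring
      _ ≤[n] (mk b * mk 1) * mk 1 ^ j := (coeffLE_mk_mul_mk_one hlb).mul_right (hone.pow j)
      _ = mk b ^ (0 + 1) * mk 1 ^ (j + 1) := by ring
  | succ l ih =>
    have hrest : CoeffNonneg (mk b ^ (l + 1) * (mk 1 : R⟦X⟧) ^ j) :=
      ((coeffNonneg_mk hb).pow _).mul (hone.pow j)
    calc _ = C c * (C (c ^ (l + 1)) * mk 1 ^ (j + 1 + l + 2)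
            - C ((l + 1) * E * c ^ l) * mk 1 ^ (j + 1 + l + 1))
          - C E * (C c ^ (l + 1) * mk 1 ^ (j + 1 + (l + 1))) := by
          simp only [map_mul, map_pow, map_add, map_natCast, map_one, Nat.cast_add, Nat.cast_one]
          ring
      _ ≤[n] C c * (mk b ^ (l + 1) * mk 1 ^ (j + 1 + 1))
            - C E * (mk b ^ (l + 1) * mk 1 ^ (j + 1)) :=
          ((ih (j + 1)).C_mul hc).sub ((mk_pow_mul_mk_one_pow_coeffLE hb hc hub _ _).C_mul hE)
      _ = (C c * mk 1 ^ 2 - C E * mk 1) * (mk b ^ (l + 1) * mk 1 ^ j) := by ring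
      _ ≤[n] (mk b * mk 1) * (mk b ^ (l + 1) * mk 1 ^ j) :=
          (coeffLE_mk_mul_mk_one hlb).mul_right hrest
      _ = mk b ^ (l + 1 + 1) * mk 1 ^ (j + 1) := by ring

theorem coeff_mk_pow_mul_mk_one_pow_le (hb : ∀ m, 0 ≤ b m) (hc : 0 ≤ c)
    (hub : ∀ q : ℕ, ∑ i ∈ range (q + 1), b i ≤ c * (q + 1)) {k j l : ℕ} (hk : k = j + 1 + l)
    (n : ℕ) :
    coeff n (mk b ^ l * mk 1 ^ (j + 1)) ≤ (n + k - 1).choose (k - 1) * c ^ l := by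
  have h := mk_pow_mul_mk_one_pow_coeffLE (n := n) hb hc hub l j n le_rfl
  rwa [← map_pow, show j + 1 + l = j + l + 1 by ring, coeff_C_mul_mk_one_pow, mul_comm (c ^ l),
    show j + l + n = n + k - 1 by omega, show j + l = k - 1 by omega] at h

end Order

end PowerSeries

theorem mul_rpow_mul_choose_le_div_rpow_mul_choose {c D C₁ α : ℝ} (hc : 0 ≤ c) (hD : 0 ≤ D)
    (hDC₁ : D ≤ C₁ * c) (hα : 0 ≤ α) {n l m N : ℕ} (hl : l ≤ m + 1) (hN : n ≤ N) :
    (l + 1) * (D * ((n : ℝ) + 1) ^ α) * c ^ l * N.choose m ≤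
      C₁ * ((m : ℝ) + 2) * ((m : ℝ) + 1) / ((N : ℝ) + 1) ^ (1 - α) * (N + 1).choose (m + 1)
        * c ^ (l + 1) := by
  have hN1 : (0 : ℝ) < N + 1 := by positivity
  have hchoose : ((m : ℝ) + 1) * (N + 1).choose (m + 1) / ((N : ℝ) + 1) ^ (1 - α)
      = ((N : ℝ) + 1) ^ α * N.choose m := by
    have := Nat.add_one_mul_choose_eq N m
    rw [Real.rpow_sub hN1, Real.rpow_one]
    field_simp
    rw [mul_comm]
    exact_mod_cast this.symm
  have hl' : (l : ℝ) + 1 ≤ m + 2 := by exact_mod_cast (by omega : l + 1 ≤ m + 2)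
  have hDn : D * ((n : ℝ) + 1) ^ α ≤ C₁ * c * ((N : ℝ) + 1) ^ α :=
    mul_le_mul hDC₁ (Real.rpow_le_rpow (by positivity) (by exact_mod_cast (by omega)) hα)
      (by positivity) (hD.trans hDC₁)
  calc (l + 1) * (D * ((n : ℝ) + 1) ^ α) * c ^ l * N.choose m
      ≤ ((m : ℝ) + 2) * (C₁ * c * ((N : ℝ) + 1) ^ α) * c ^ l * N.choose m := by
        gcongr
    _ = C₁ * ((m : ℝ) + 2) * (((m : ℝ) + 1) * (N + 1).choose (m + 1) / ((N : ℝ) + 1) ^ (1 - α))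
        * c ^ (l + 1) := by rw [hchoose]; ring
    _ = _ := by ring

theorem PowerSeries.le_coeff_mk_pow_mul_mk_one_pow {b : ℕ → ℝ} {c D C₁ α : ℝ}
    (hb : ∀ m, 0 ≤ b m) (hc : 0 ≤ c) (hD : 0 ≤ D) (hC₁ : 0 ≤ C₁) (hDC₁ : D ≤ C₁ * c)
    (hα : 0 ≤ α) (hub : ∀ q : ℕ, ∑ i ∈ range (q + 1), b i ≤ c * (q + 1))
    (hlb : ∀ q : ℕ, c * (q + 1) - D * ((q : ℝ) + 1) ^ α ≤ ∑ i ∈ range (q + 1), b i)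
    {k j l : ℕ} (hk : k = j + 1 + l) (n : ℕ) :
    (1 - C₁ * k * ((k : ℝ) - 1) / ((n : ℝ) + k - 1) ^ (1 - α)) * (n + k - 1).choose (k - 1)
      * c ^ l ≤ coeff n (mk b ^ l * mk 1 ^ (j + 1)) := by
  subst hk
  cases l with
  | zero =>
    rw [pow_zero, pow_zero, mul_one, one_mul, ← one_mul (mk 1 ^ (j + 1)), ← map_one C,
      coeff_C_mul_mk_one_pow, one_mul,
      show n + (j + 1 + 0) - 1 = j + n by omega, show j + 1 + 0 - 1 = j by omega]
    have hbase : 0 ≤ (n : ℝ) + ↑(j + 1 + 0) - 1 := by push_cast; linarith [n.cast_nonneg (α := ℝ)]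
    have hk1 : ((j + 1 + 0 : ℕ) : ℝ) - 1 = j := by push_cast; ring
    rw [hk1]
    exact mul_le_of_le_one_left (Nat.cast_nonneg _)
      (sub_le_self _ (div_nonneg (by positivity) (Real.rpow_nonneg hbase _)))
  | succ l =>
    have hlbn : ∀ q ≤ n, c * (q + 1) - D * ((n : ℝ) + 1) ^ α ≤ ∑ i ∈ range (q + 1), b i :=
      fun q hq => (sub_le_sub_left (mul_le_mul_of_nonneg_left (Real.rpow_le_rpow (by positivity)
        (by exact_mod_cast (by omega)) hα) hD) _).trans (hlb q)
    have hcoeff := coeffLE_mk_pow_mul_mk_one_pow hb hc (by positivity) hub hlbn l j n le_rfl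
    rw [map_sub, coeff_C_mul_mk_one_pow, coeff_C_mul_mk_one_pow] at hcoeff
    have herr := mul_rpow_mul_choose_le_div_rpow_mul_choose hc hD hDC₁ hα (n := n) (l := l)
      (m := j + l) (N := n + j + l) (by omega) (by omega)
    rw [show n + (j + 1 + (l + 1)) - 1 = n + j + l + 1 by omega,
      show j + 1 + (l + 1) - 1 = j + l + 1 by omega,
      show (n : ℝ) + ↑(j + 1 + (l + 1)) - 1 = ↑(n + j + l) + 1 by push_cast; ring]
    push_cast at herr hcoeff ⊢
    rw [show j + l + 1 + n = n + j + l + 1 by ring, show j + l + n = n + j + l by ring] at hcoeff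
    linear_combination hcoeff + herr
theorem stmt11_general (a : ℕ → ℝ) (ha : ∀ n, 1 ≤ a n)
    (C D α : ℝ) (hC : 1 < C) (hD : 0 < D) (hα0 : 0 ≤ α)
    (hsum : ∀ n : ℕ,
      0 ≤ C * ((n : ℝ) + 1) - ∑ i ∈ Finset.range (n + 1), a i ∧
      C * ((n : ℝ) + 1) - ∑ i ∈ Finset.range (n + 1), a i ≤ D * ((n : ℝ) + 1) ^ α)
    (k : ℕ) (I : Fin k → Bool)
    (hk₀ : 1 ≤ (Finset.univ.filter fun i => I i = false).card)
    (n : ℕ) :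
    (1 - (D / min (C - 1) 1) * k * ((k : ℝ) - 1) / ((n : ℝ) + k - 1) ^ ((1 : ℝ) - α)) *
        (Nat.choose (n + k - 1) (k - 1) : ℝ) *
        (C - 1) ^ (Finset.univ.filter fun i => I i = true).card ≤
      (∑ x ∈ Finset.Nat.antidiagonalTuple k n,
        ∏ i : Fin k, if I i then a (x i) - 1 else 1) ∧
    (∑ x ∈ Finset.Nat.antidiagonalTuple k n,
        ∏ i : Fin k, if I i then a (x i) - 1 else 1) ≤
      (Nat.choose (n + k - 1) (k - 1) : ℝ) *
        (C - 1) ^ (Finset.univ.filter fun i => I i = true).card := by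
  obtain ⟨j, hj⟩ : ∃ j, #{i | I i = false} = j + 1 := ⟨_, (Nat.sub_add_cancel hk₀).symm⟩
  have hk : k = j + 1 + #{i | I i = true} := by
    have := card_filter_add_card_filter_not (s := univ) (I · = true)
    simp only [Bool.not_eq_true, card_univ, Fintype.card_fin] at this
    omega
  have hpartial (q : ℕ) : ∑ i ∈ range (q + 1), (a i - 1) = ∑ i ∈ range (q + 1), a i - (q + 1) := by
    simp [sum_sub_distrib]
  have hmin : 0 < min (C - 1) 1 := lt_min (by linarith) one_pos
  have hDC₁ : D ≤ D / min (C - 1) 1 * (C - 1) := by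
    rw [div_mul_eq_mul_div, le_div_iff₀ hmin]
    exact mul_le_mul_of_nonneg_left (min_le_left _ _) hD.le
  rw [sum_antidiagonalTuple_prod_ite_eq_coeff I (fun m => a m - 1), hj]
  refine ⟨le_coeff_mk_pow_mul_mk_one_pow (fun m => sub_nonneg.2 (ha m)) (by linarith) hD.le
    (div_nonneg hD.le hmin.le) hDC₁ hα0 (fun q => ?_) (fun q => ?_) hk n,
    coeff_mk_pow_mul_mk_one_pow_le (fun m => sub_nonneg.2 (ha m)) (by linarith) (fun q => ?_) hk n⟩
  all_goals linarith [hpartial q, hsum q]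

/-- For a tuple `I ∈ {0,1}^k` (here `I : Fin k → Bool`, `true` meaning the
entry 1 and `false` meaning the entry 0) with `k₀ ≥ 1` zero entries and `k₁` one entries,
the convolution `a^I_n = Σ_{x₁+⋯+x_k=n} Π_i a^{(I i)}_{x_i}` (with `a^{(0)}_x = 1`,
`a^{(1)}_x = a_x - 1`) satisfies the two-sided estimate with `C₁ = D / min(C-1, 1)`. -/
theorem stmt11 (a : ℕ → ℝ) (ha : ∀ n, 1 ≤ a n)
    (C D α : ℝ) (hC : 1 < C) (hD : 0 < D) (hα0 : 0 ≤ α) (hα1 : α < 1)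
    (hsum : ∀ n : ℕ,
      0 ≤ C * ((n : ℝ) + 1) - ∑ i ∈ Finset.range (n + 1), a i ∧
      C * ((n : ℝ) + 1) - ∑ i ∈ Finset.range (n + 1), a i ≤ D * ((n : ℝ) + 1) ^ α)
    (k : ℕ) (hk : 2 ≤ k) (I : Fin k → Bool)
    (hk₀ : 1 ≤ (Finset.univ.filter fun i => I i = false).card)
    (n : ℕ) :
    (1 - (D / min (C - 1) 1) * k * ((k : ℝ) - 1) / ((n : ℝ) + k - 1) ^ ((1 : ℝ) - α)) *
        (Nat.choose (n + k - 1) (k - 1) : ℝ) *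
        (C - 1) ^ (Finset.univ.filter fun i => I i = true).card ≤
      (∑ x ∈ Finset.Nat.antidiagonalTuple k n,
        ∏ i : Fin k, if I i then a (x i) - 1 else 1) ∧
    (∑ x ∈ Finset.Nat.antidiagonalTuple k n,
        ∏ i : Fin k, if I i then a (x i) - 1 else 1) ≤
      (Nat.choose (n + k - 1) (k - 1) : ℝ) *
        (C - 1) ^ (Finset.univ.filter fun i => I i = true).card :=
  stmt11_general a ha C D α hC hD hα0 hsum k I hk₀ n
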